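/- (Equation (4.5) of the paper: vanishing commutators of the adapted polar frame.) For every function F : ℂ^{n−1} × ℂ → ℂ of class C² in the real sense and all α, β = 1, …, n−1: Z(e_α(F)) − e_α(Z(F)) = 0, Z(e_β̄(F)) − e_β̄(Z(F)) = 0, and e_α(e_β(F)) − e_β(e_α(F)) = 0; that is, [Z, e_α] = 0, [Z, e_β̄] = 0 and [e_α, e_β] = 0 as first-order differential operators. -/

import Mathlib

/-!
With the potentials `Φ = -(log ρ² + ½ log N)` and `Ψ = ½ log N` the adapted frame reads
`e_α = ∂_α + (∂_α Φ) Z + (∂_α Ψ) Z̄` and `e_ᾱ = ∂_ᾱ + (∂_ᾱ Ψ) Z + (∂_ᾱ Φ) Z̄`.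
The operators `Z = ζ ∂_ζ` and `Z̄ = ζ̄ ∂_ζ̄` are derivations that kill functions of `w`, and by the
symmetry of second derivatives of a `C²` function they commute with each other and with `∂_α`
and `∂_ᾱ`; hence they commute with every `e_α` and `e_ᾱ`. What is left of `[e_α, e_β]` is
`(∂_α∂_β Φ - ∂_β∂_α Φ) Z + (∂_α∂_β Ψ - ∂_β∂_α Ψ) Z̄ = 0`.
-/

noncomputable section

/-- Wirtinger derivative `∂f/∂u(a)` of `f` at `a` along the complex direction `e`:
`(1/2)(Df(a)[e] − i·Df(a)[i·e])`, with `Df` the real Fréchet derivative. -/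
def wirt {E : Type*} [NormedAddCommGroup E] [NormedSpace ℂ E]
    (f : E → ℂ) (a e : E) : ℂ :=
  (1 / 2) * (fderiv ℝ f a e - Complex.I * fderiv ℝ f a (Complex.I • e))

/-- Conjugate Wirtinger derivative `∂f/∂ū(a)` of `f` at `a` along the complex direction `e`:
`(1/2)(Df(a)[e] + i·Df(a)[i·e])`. -/
def wirtBar {E : Type*} [NormedAddCommGroup E] [NormedSpace ℂ E]
    (f : E → ℂ) (a e : E) : ℂ :=
  (1 / 2) * (fderiv ℝ f a e + Complex.I * fderiv ℝ f a (Complex.I • e))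

/-- `N(w) = 1 + Σ_γ |w^γ|²`. -/
def Nfun {m : ℕ} (w : Fin m → ℂ) : ℝ := 1 + ∑ γ, Complex.normSq (w γ)

/-- `L(w) = log(ρ(w)²) + log N(w)`. -/
def Lfun {m : ℕ} (ρ : (Fin m → ℂ) → ℝ) (w : Fin m → ℂ) : ℝ :=
  Real.log (ρ w ^ 2) + Real.log (Nfun w)

/-- `g_{αβ̄}(w) = ∂²L/∂w^α∂w̄^β(w)`. -/
def gfun {m : ℕ} (ρ : (Fin m → ℂ) → ℝ) (α β : Fin m) (w : Fin m → ℂ) : ℂ :=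
  wirt (fun w' => wirtBar (fun w'' => ((Lfun ρ w'' : ℝ) : ℂ)) w' (Pi.single β 1))
    w (Pi.single α 1)

/-- The operator `Z(F) = ζ·∂F/∂ζ` on functions of `(w, ζ) ∈ ℂ^m × ℂ`. -/
def Zop {m : ℕ} (F : (Fin m → ℂ) × ℂ → ℂ) (p : (Fin m → ℂ) × ℂ) : ℂ :=
  p.2 * wirt F p (0, 1)

/-- The operator `Z̄(F) = ζ̄·∂F/∂ζ̄`. -/
def ZbarOp {m : ℕ} (F : (Fin m → ℂ) × ℂ → ℂ) (p : (Fin m → ℂ) × ℂ) : ℂ :=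
  (starRingEnd ℂ) p.2 * wirtBar F p (0, 1)

/-- The adapted polar frame operator
`e_α(F) = ∂F/∂w^α − (∂(log ρ²)/∂w^α)·ζ·∂F/∂ζ + (1/2)(∂(log N)/∂w^α)·(ζ̄·∂F/∂ζ̄ − ζ·∂F/∂ζ)`. -/
def eOp {m : ℕ} (ρ : (Fin m → ℂ) → ℝ) (α : Fin m)
    (F : (Fin m → ℂ) × ℂ → ℂ) (p : (Fin m → ℂ) × ℂ) : ℂ :=
  wirt F p (Pi.single α 1, 0)
    - wirt (fun w => ((Real.log (ρ w ^ 2) : ℝ) : ℂ)) p.1 (Pi.single α 1)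
        * (p.2 * wirt F p (0, 1))
    + (1 / 2) * wirt (fun w => ((Real.log (Nfun w) : ℝ) : ℂ)) p.1 (Pi.single α 1)
        * ((starRingEnd ℂ) p.2 * wirtBar F p (0, 1) - p.2 * wirt F p (0, 1))

/-- The adapted polar frame operator
`e_ᾱ(F) = ∂F/∂w̄^α − (∂(log ρ²)/∂w̄^α)·ζ̄·∂F/∂ζ̄ + (1/2)(∂(log N)/∂w̄^α)·(ζ·∂F/∂ζ − ζ̄·∂F/∂ζ̄)`. -/
def eBarOp {m : ℕ} (ρ : (Fin m → ℂ) → ℝ) (α : Fin m)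
    (F : (Fin m → ℂ) × ℂ → ℂ) (p : (Fin m → ℂ) × ℂ) : ℂ :=
  wirtBar F p (Pi.single α 1, 0)
    - wirtBar (fun w => ((Real.log (ρ w ^ 2) : ℝ) : ℂ)) p.1 (Pi.single α 1)
        * ((starRingEnd ℂ) p.2 * wirtBar F p (0, 1))
    + (1 / 2) * wirtBar (fun w => ((Real.log (Nfun w) : ℝ) : ℂ)) p.1 (Pi.single α 1)
        * (p.2 * wirt F p (0, 1) - (starRingEnd ℂ) p.2 * wirtBar F p (0, 1))

open Complex

section Wirtinger

variable {E : Type*} [NormedAddCommGroup E] [NormedSpace ℂ E] {f g : E → ℂ} {a : E}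

lemma differentiable_fderiv_of_contDiff_two (hf : ContDiff ℝ 2 f) :
    Differentiable ℝ (fderiv ℝ f) :=
  (hf.fderiv_right (m := 1) (by norm_num)).differentiable (by norm_num)

@[fun_prop]
lemma differentiable_wirt (hf : ContDiff ℝ 2 f) (u : E) :
    Differentiable ℝ fun x => wirt f x u := by
  have := differentiable_fderiv_of_contDiff_two hf
  unfold wirt; fun_prop

@[fun_prop]
lemma differentiable_wirtBar (hf : ContDiff ℝ 2 f) (u : E) :
    Differentiable ℝ fun x => wirtBar f x u := by
  have := differentiable_fderiv_of_contDiff_two hf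
  unfold wirtBar; fun_prop

@[simp]
lemma wirt_const (c : ℂ) (e : E) : wirt (fun _ => c) a e = 0 := by simp [wirt]

@[simp]
lemma wirtBar_const (c : ℂ) (e : E) : wirtBar (fun _ => c) a e = 0 := by simp [wirtBar]

@[simp]
lemma wirt_zero (f : E → ℂ) (a : E) : wirt f a 0 = 0 := by simp [wirt]

@[simp]
lemma wirtBar_zero (f : E → ℂ) (a : E) : wirtBar f a 0 = 0 := by simp [wirtBar]

lemma wirt_neg (e : E) : wirt (fun x => -f x) a e = -wirt f a e := by
  simp only [wirt, fderiv_fun_neg, neg_apply]; ring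

lemma wirtBar_neg (e : E) : wirtBar (fun x => -f x) a e = -wirtBar f a e := by
  simp only [wirtBar, fderiv_fun_neg, neg_apply]; ring

lemma wirt_add (hf : DifferentiableAt ℝ f a) (hg : DifferentiableAt ℝ g a) (e : E) :
    wirt (fun x => f x + g x) a e = wirt f a e + wirt g a e := by
  simp only [wirt, fderiv_fun_add hf hg, add_apply]; ring

lemma wirtBar_add (hf : DifferentiableAt ℝ f a) (hg : DifferentiableAt ℝ g a) (e : E) :
    wirtBar (fun x => f x + g x) a e = wirtBar f a e + wirtBar g a e := by
  simp only [wirtBar, fderiv_fun_add hf hg, add_apply]; ring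

lemma wirt_sub (hf : DifferentiableAt ℝ f a) (hg : DifferentiableAt ℝ g a) (e : E) :
    wirt (fun x => f x - g x) a e = wirt f a e - wirt g a e := by
  simp only [wirt, fderiv_fun_sub hf hg, sub_apply]; ring

lemma wirtBar_sub (hf : DifferentiableAt ℝ f a) (hg : DifferentiableAt ℝ g a) (e : E) :
    wirtBar (fun x => f x - g x) a e = wirtBar f a e - wirtBar g a e := by
  simp only [wirtBar, fderiv_fun_sub hf hg, sub_apply]; ring

lemma wirt_mul (hf : DifferentiableAt ℝ f a) (hg : DifferentiableAt ℝ g a) (e : E) :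
    wirt (fun x => f x * g x) a e = wirt f a e * g a + f a * wirt g a e := by
  simp only [wirt, fderiv_fun_mul hf hg, add_apply, smul_apply, smul_eq_mul]; ring

lemma wirtBar_mul (hf : DifferentiableAt ℝ f a) (hg : DifferentiableAt ℝ g a) (e : E) :
    wirtBar (fun x => f x * g x) a e = wirtBar f a e * g a + f a * wirtBar g a e := by
  simp only [wirtBar, fderiv_fun_mul hf hg, add_apply, smul_apply, smul_eq_mul]; ring

lemma fderiv_fderiv_apply (hf : ContDiff ℝ 2 f) (a u v : E) :
    fderiv ℝ (fun x => fderiv ℝ f x u) a v = fderiv ℝ (fderiv ℝ f) a v u := by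
  rw [fderiv_clm_apply (differentiable_fderiv_of_contDiff_two hf a) (differentiableAt_const u)]
  simp

lemma fderiv_wirt_apply (hf : ContDiff ℝ 2 f) (a u v : E) :
    fderiv ℝ (fun x => wirt f x u) a v =
      (1 / 2) * (fderiv ℝ (fderiv ℝ f) a v u - I * fderiv ℝ (fderiv ℝ f) a v (I • u)) := by
  have := differentiable_fderiv_of_contDiff_two hf
  unfold wirt
  rw [fderiv_const_mul (by fun_prop), fderiv_fun_sub (by fun_prop) (by fun_prop),
    fderiv_const_mul (by fun_prop)]
  simp [fderiv_fderiv_apply hf]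

lemma fderiv_wirtBar_apply (hf : ContDiff ℝ 2 f) (a u v : E) :
    fderiv ℝ (fun x => wirtBar f x u) a v =
      (1 / 2) * (fderiv ℝ (fderiv ℝ f) a v u + I * fderiv ℝ (fderiv ℝ f) a v (I • u)) := by
  have := differentiable_fderiv_of_contDiff_two hf
  unfold wirtBar
  rw [fderiv_const_mul (by fun_prop), fderiv_fun_add (by fun_prop) (by fun_prop),
    fderiv_const_mul (by fun_prop)]
  simp [fderiv_fderiv_apply hf, mul_add]

lemma wirt_wirt_comm (hf : ContDiff ℝ 2 f) (a u v : E) :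
    wirt (fun x => wirt f x u) a v = wirt (fun x => wirt f x v) a u := by
  have hs := hf.contDiffAt.isSymmSndFDerivAt (by simp) (x := a)
  rw [wirt.eq_1 (fun x => wirt f x u), wirt.eq_1 (fun x => wirt f x v)]
  simp only [fderiv_wirt_apply hf]
  rw [hs v u, hs v (I • u), hs (I • v) u, hs (I • v) (I • u)]
  ring

lemma wirt_wirtBar_comm (hf : ContDiff ℝ 2 f) (a u v : E) :
    wirt (fun x => wirtBar f x u) a v = wirtBar (fun x => wirt f x v) a u := by
  have hs := hf.contDiffAt.isSymmSndFDerivAt (by simp) (x := a)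
  rw [wirt.eq_1 (fun x => wirtBar f x u), wirtBar.eq_1 (fun x => wirt f x v)]
  simp only [fderiv_wirt_apply hf, fderiv_wirtBar_apply hf]
  rw [hs v u, hs v (I • u), hs (I • v) u, hs (I • v) (I • u)]
  ring

end Wirtinger

section Product

open ComplexConjugate

variable {E₁ : Type*} [NormedAddCommGroup E₁] [NormedSpace ℂ E₁] {G : E₁ → ℂ} {p : E₁ × ℂ}

lemma fderiv_comp_fst_apply (hG : DifferentiableAt ℝ G p.1) (v : E₁ × ℂ) :
    fderiv ℝ (fun q : E₁ × ℂ => G q.1) p v = fderiv ℝ G p.1 v.1 :=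
  congrArg (· v) (hG.hasFDerivAt.comp p hasFDerivAt_fst).fderiv

lemma fderiv_conj_snd_apply (v : E₁ × ℂ) :
    fderiv ℝ (fun q : E₁ × ℂ => conj q.2) p v = conj v.2 :=
  congrArg (· v) ((conjCLE : ℂ →L[ℝ] ℂ).hasFDerivAt.comp p hasFDerivAt_snd).fderiv

lemma wirt_comp_fst (hG : DifferentiableAt ℝ G p.1) (v : E₁ × ℂ) :
    wirt (fun q : E₁ × ℂ => G q.1) p v = wirt G p.1 v.1 := by
  simp [wirt, fderiv_comp_fst_apply hG]

lemma wirtBar_comp_fst (hG : DifferentiableAt ℝ G p.1) (v : E₁ × ℂ) :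
    wirtBar (fun q : E₁ × ℂ => G q.1) p v = wirtBar G p.1 v.1 := by
  simp [wirtBar, fderiv_comp_fst_apply hG]

lemma wirt_snd (v : E₁ × ℂ) : wirt (fun q : E₁ × ℂ => q.2) p v = v.2 := by
  simp only [wirt, fderiv_snd, ContinuousLinearMap.coe_snd', Prod.smul_snd, smul_eq_mul,
    ← mul_assoc, I_mul_I]
  ring

lemma wirtBar_snd (v : E₁ × ℂ) : wirtBar (fun q : E₁ × ℂ => q.2) p v = 0 := by
  simp [wirtBar, fderiv_snd, ← mul_assoc]

lemma wirt_conj_snd (v : E₁ × ℂ) : wirt (fun q : E₁ × ℂ => conj q.2) p v = 0 := by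
  simp [wirt, fderiv_conj_snd_apply, ← mul_assoc]

end Product

section Fiber

variable {m : ℕ} {f g F : (Fin m → ℂ) × ℂ → ℂ} {p : (Fin m → ℂ) × ℂ}

@[fun_prop]
lemma differentiable_Zop (hF : ContDiff ℝ 2 F) : Differentiable ℝ (Zop F) := by
  unfold Zop; fun_prop

@[fun_prop]
lemma differentiable_ZbarOp (hF : ContDiff ℝ 2 F) : Differentiable ℝ (ZbarOp F) := by
  unfold ZbarOp; fun_prop

lemma Zop_add (hf : DifferentiableAt ℝ f p) (hg : DifferentiableAt ℝ g p) :
    Zop (fun q => f q + g q) p = Zop f p + Zop g p := by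
  simp only [Zop, wirt_add hf hg]; ring

lemma ZbarOp_add (hf : DifferentiableAt ℝ f p) (hg : DifferentiableAt ℝ g p) :
    ZbarOp (fun q => f q + g q) p = ZbarOp f p + ZbarOp g p := by
  simp only [ZbarOp, wirtBar_add hf hg]; ring

lemma Zop_mul (hf : DifferentiableAt ℝ f p) (hg : DifferentiableAt ℝ g p) :
    Zop (fun q => f q * g q) p = Zop f p * g p + f p * Zop g p := by
  simp only [Zop, wirt_mul hf hg]; ring

lemma ZbarOp_mul (hf : DifferentiableAt ℝ f p) (hg : DifferentiableAt ℝ g p) :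
    ZbarOp (fun q => f q * g q) p = ZbarOp f p * g p + f p * ZbarOp g p := by
  simp only [ZbarOp, wirtBar_mul hf hg]; ring

lemma Zop_comp_fst {G : (Fin m → ℂ) → ℂ} (hG : DifferentiableAt ℝ G p.1) :
    Zop (fun q => G q.1) p = 0 := by
  simp [Zop, wirt_comp_fst hG]

lemma ZbarOp_comp_fst {G : (Fin m → ℂ) → ℂ} (hG : DifferentiableAt ℝ G p.1) :
    ZbarOp (fun q => G q.1) p = 0 := by
  simp [ZbarOp, wirtBar_comp_fst hG]

lemma Zop_wirt_comm (hF : ContDiff ℝ 2 F) (u : Fin m → ℂ) (p : (Fin m → ℂ) × ℂ) :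
    Zop (fun q => wirt F q (u, 0)) p = wirt (Zop F) p (u, 0) := by
  unfold Zop
  rw [wirt_mul (by fun_prop) (by fun_prop), wirt_snd, wirt_wirt_comm hF]
  simp

lemma Zop_wirtBar_comm (hF : ContDiff ℝ 2 F) (u : Fin m → ℂ) (p : (Fin m → ℂ) × ℂ) :
    Zop (fun q => wirtBar F q (u, 0)) p = wirtBar (Zop F) p (u, 0) := by
  unfold Zop
  rw [wirtBar_mul (by fun_prop) (by fun_prop), wirtBar_snd, wirt_wirtBar_comm hF]
  simp

lemma ZbarOp_wirt_comm (hF : ContDiff ℝ 2 F) (u : Fin m → ℂ) (p : (Fin m → ℂ) × ℂ) :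
    ZbarOp (fun q => wirt F q (u, 0)) p = wirt (ZbarOp F) p (u, 0) := by
  unfold ZbarOp
  rw [wirt_mul (by fun_prop) (by fun_prop), wirt_conj_snd, ← wirt_wirtBar_comm hF]
  simp

lemma Zop_ZbarOp_comm (hF : ContDiff ℝ 2 F) (p : (Fin m → ℂ) × ℂ) :
    Zop (ZbarOp F) p = ZbarOp (Zop F) p := by
  unfold Zop ZbarOp
  rw [wirt_mul (by fun_prop) (by fun_prop), wirtBar_mul (by fun_prop) (by fun_prop),
    wirt_conj_snd, wirtBar_snd, wirt_wirtBar_comm hF]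
  ring

end Fiber

section Frame

variable {m : ℕ} {φ χ : (Fin m → ℂ) → ℂ} {F : (Fin m → ℂ) × ℂ → ℂ}

def polarFrame (φ χ : (Fin m → ℂ) → ℂ) (u : Fin m → ℂ) (F : (Fin m → ℂ) × ℂ → ℂ)
    (p : (Fin m → ℂ) × ℂ) : ℂ :=
  wirt F p (u, 0) + wirt φ p.1 u * Zop F p + wirt χ p.1 u * ZbarOp F p

def polarFrameBar (φ χ : (Fin m → ℂ) → ℂ) (u : Fin m → ℂ) (F : (Fin m → ℂ) × ℂ → ℂ)
    (p : (Fin m → ℂ) × ℂ) : ℂ :=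
  wirtBar F p (u, 0) + wirtBar φ p.1 u * Zop F p + wirtBar χ p.1 u * ZbarOp F p

variable (hφ : ContDiff ℝ 2 φ) (hχ : ContDiff ℝ 2 χ) (hF : ContDiff ℝ 2 F)
  (u : Fin m → ℂ) (p : (Fin m → ℂ) × ℂ)
include hφ hχ hF

lemma Zop_polarFrame : Zop (polarFrame φ χ u F) p = polarFrame φ χ u (Zop F) p := by
  unfold polarFrame
  simp (disch := fun_prop) only [Zop_add, Zop_mul, Zop_wirt_comm hF, Zop_ZbarOp_comm hF]
  rw [Zop_comp_fst (G := fun w => wirt φ w u) (by fun_prop),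
    Zop_comp_fst (G := fun w => wirt χ w u) (by fun_prop)]
  ring

lemma ZbarOp_polarFrame : ZbarOp (polarFrame φ χ u F) p = polarFrame φ χ u (ZbarOp F) p := by
  unfold polarFrame
  simp (disch := fun_prop) only [ZbarOp_add, ZbarOp_mul, ZbarOp_wirt_comm hF, Zop_ZbarOp_comm hF]
  rw [ZbarOp_comp_fst (G := fun w => wirt φ w u) (by fun_prop),
    ZbarOp_comp_fst (G := fun w => wirt χ w u) (by fun_prop)]
  ring

lemma Zop_polarFrameBar : Zop (polarFrameBar φ χ u F) p = polarFrameBar φ χ u (Zop F) p := by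
  unfold polarFrameBar
  simp (disch := fun_prop) only [Zop_add, Zop_mul, Zop_wirtBar_comm hF, Zop_ZbarOp_comm hF]
  rw [Zop_comp_fst (G := fun w => wirtBar φ w u) (by fun_prop),
    Zop_comp_fst (G := fun w => wirtBar χ w u) (by fun_prop)]
  ring

lemma polarFrame_polarFrame (v : Fin m → ℂ) :
    polarFrame φ χ u (polarFrame φ χ v F) p =
      wirt (fun q => wirt F q (v, 0)) p (u, 0)
        + wirt (fun w => wirt φ w v) p.1 u * Zop F p
        + wirt (fun w => wirt χ w v) p.1 u * ZbarOp F p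
        + wirt φ p.1 v * wirt (Zop F) p (u, 0) + wirt φ p.1 u * wirt (Zop F) p (v, 0)
        + wirt χ p.1 v * wirt (ZbarOp F) p (u, 0) + wirt χ p.1 u * wirt (ZbarOp F) p (v, 0)
        + wirt φ p.1 u * wirt φ p.1 v * Zop (Zop F) p
        + wirt χ p.1 u * wirt χ p.1 v * ZbarOp (ZbarOp F) p
        + wirt φ p.1 u * wirt χ p.1 v * ZbarOp (Zop F) p
        + wirt χ p.1 u * wirt φ p.1 v * Zop (ZbarOp F) p := by
  rw [polarFrame, Zop_polarFrame hφ hχ hF, ZbarOp_polarFrame hφ hχ hF]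
  unfold polarFrame
  simp (disch := fun_prop) only [wirt_add, wirt_mul]
  rw [wirt_comp_fst (G := fun w => wirt φ w v) (by fun_prop),
    wirt_comp_fst (G := fun w => wirt χ w v) (by fun_prop)]
  ring

lemma polarFrame_comm (v : Fin m → ℂ) :
    polarFrame φ χ u (polarFrame φ χ v F) p = polarFrame φ χ v (polarFrame φ χ u F) p := by
  rw [polarFrame_polarFrame hφ hχ hF, polarFrame_polarFrame hφ hχ hF,
    wirt_wirt_comm hF p (v, 0), wirt_wirt_comm hφ p.1 v, wirt_wirt_comm hχ p.1 v,
    Zop_ZbarOp_comm hF]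
  ring

end Frame

section Potentials

@[fun_prop]
lemma Differentiable.ofReal_comp {E : Type*} [NormedAddCommGroup E] [NormedSpace ℝ E]
    {f : E → ℝ} (hf : Differentiable ℝ f) : Differentiable ℝ fun x => (f x : ℂ) :=
  ofRealCLM.differentiable.comp hf

@[fun_prop]
lemma ContDiff.ofReal_comp {E : Type*} [NormedAddCommGroup E] [NormedSpace ℝ E]
    {n : WithTop ℕ∞} {f : E → ℝ} (hf : ContDiff ℝ n f) : ContDiff ℝ n fun x => (f x : ℂ) :=
  ofRealCLM.contDiff.comp hf

variable {m : ℕ}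

lemma Nfun_pos (w : Fin m → ℂ) : 0 < Nfun w := by
  unfold Nfun
  exact add_pos_of_pos_of_nonneg one_pos (Finset.sum_nonneg fun γ _ => normSq_nonneg _)

@[fun_prop]
lemma contDiff_Nfun {n : WithTop ℕ∞} : ContDiff ℝ n (Nfun (m := m)) := by
  unfold Nfun
  simp_rw [normSq_eq_norm_sq]
  exact contDiff_const.add (ContDiff.sum fun γ _ => (contDiff_apply ℝ ℂ γ).norm_sq ℝ)

@[fun_prop]
lemma differentiable_Nfun : Differentiable ℝ (Nfun (m := m)) :=
  contDiff_Nfun.differentiable one_ne_zero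

def halfLogN (w : Fin m → ℂ) : ℂ := (1 / 2) * ((Real.log (Nfun w) : ℝ) : ℂ)

def polarPotential (ρ : (Fin m → ℂ) → ℝ) (w : Fin m → ℂ) : ℂ :=
  -((Real.log (ρ w ^ 2) : ℝ) : ℂ) - halfLogN w

variable {ρ : (Fin m → ℂ) → ℝ} (hρ : Differentiable ℝ ρ) (hρ0 : ∀ w, ρ w ≠ 0)
include hρ hρ0

lemma eOp_eq_polarFrame (α : Fin m) :
    eOp ρ α = polarFrame (polarPotential ρ) halfLogN (Pi.single α 1) := by
  ext F p
  unfold eOp polarFrame polarPotential halfLogN Zop ZbarOp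
  simp (disch := fun_prop (disch := simp [hρ0, (Nfun_pos _).ne'])) only
    [wirt_sub, wirt_neg, wirt_mul, wirt_const]
  ring

lemma eBarOp_eq_polarFrameBar (α : Fin m) :
    eBarOp ρ α = polarFrameBar halfLogN (polarPotential ρ) (Pi.single α 1) := by
  ext F p
  unfold eBarOp polarFrameBar polarPotential halfLogN Zop ZbarOp
  simp (disch := fun_prop (disch := simp [hρ0, (Nfun_pos _).ne'])) only
    [wirtBar_sub, wirtBar_neg, wirtBar_mul, wirtBar_const]
  ring

end Potentials

theorem statement11_general (m : ℕ) (ρ : (Fin m → ℂ) → ℝ)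
    (hρpos : ∀ w, 0 < ρ w) (hρ : ContDiff ℝ 2 ρ)
    (F : (Fin m → ℂ) × ℂ → ℂ) (hF : ContDiff ℝ 2 F) :
    ∀ (α β : Fin m) (p : (Fin m → ℂ) × ℂ),
      Zop (eOp ρ α F) p - eOp ρ α (Zop F) p = 0
      ∧ Zop (eBarOp ρ β F) p - eBarOp ρ β (Zop F) p = 0
      ∧ eOp ρ α (eOp ρ β F) p - eOp ρ β (eOp ρ α F) p = 0 := by
  have hρ0 : ∀ w, ρ w ≠ 0 := fun w => (hρpos w).ne'
  have hΨ : ContDiff ℝ 2 (halfLogN (m := m)) := by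
    unfold halfLogN; fun_prop (disch := simp [(Nfun_pos _).ne'])
  have hΦ : ContDiff ℝ 2 (polarPotential ρ) := by
    unfold polarPotential halfLogN; fun_prop (disch := simp [hρ0, (Nfun_pos _).ne'])
  intro α β p
  simp only [eOp_eq_polarFrame (hρ.differentiable two_ne_zero) hρ0,
    eBarOp_eq_polarFrameBar (hρ.differentiable two_ne_zero) hρ0, sub_eq_zero]
  exact ⟨Zop_polarFrame hΦ hΨ hF _ p, Zop_polarFrameBar hΨ hΦ hF _ p,
    polarFrame_comm hΦ hΨ hF _ p _⟩

/-- **Equation (4.5): vanishing commutators of the adapted polar frame.** For any `C²`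
function `F : ℂ^m × ℂ → ℂ` and all `α, β`: `[Z, e_α]F = 0`, `[Z, e_β̄]F = 0` and
`[e_α, e_β]F = 0`. Here `ℂ^{n−1} = ℂ^m` with `m = n − 1 ≥ 1`. -/
theorem statement11 (m : ℕ) (hm : 1 ≤ m) (ρ : (Fin m → ℂ) → ℝ)
    (hρpos : ∀ w, 0 < ρ w) (hρ : ContDiff ℝ 2 ρ)
    (F : (Fin m → ℂ) × ℂ → ℂ) (hF : ContDiff ℝ 2 F) :
    ∀ (α β : Fin m) (p : (Fin m → ℂ) × ℂ),
      Zop (eOp ρ α F) p - eOp ρ α (Zop F) p = 0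
      ∧ Zop (eBarOp ρ β F) p - eBarOp ρ β (Zop F) p = 0
      ∧ eOp ρ α (eOp ρ β F) p - eOp ρ β (eOp ρ α F) p = 0 :=
  statement11_general m ρ hρpos hρ F hF

end
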